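/- arXiv:1809.07459 — 5 statements merged into one kernel-verified Lean document; each statement's English description precedes it below -/
import Mathlib

section
/- For any positive integers k and m, the function n ↦ p(n,k) is eventually-everywhere periodic modulo m: there exists a positive integer L such that p(n + L, k) ≡ p(n, k) (mod m) for all natural numbers n. -/
/-!
Removing one part equal to `k + 1` gives the recurrence
`p (n + (k + 1)) (k + 1) = p n (k + 1) + p (n + (k + 1)) k`, so in `ZMod m` the increments of
`p · (k + 1)` over steps of `k + 1` are the values of `p · k`, shifted. If these are periodic with
period `L`, then the increment of `p · (k + 1)` over `L (k + 1)` is itself periodic with period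
`L (k + 1)`, and adding it `m` times gives zero in `ZMod m`. Induction on `k` starts from
`p (n + 1) 0 = 0`.
-/

/-- `p n k` is the number of partitions of `n` into parts each of size at most `k`
(with `p 0 k = 1`). -/
def p (n k : ℕ) : ℕ :=
  (Finset.univ.filter (fun P : n.Partition => ∀ i ∈ P.parts, i ≤ k)).card

open Finset Function

section Increments

variable {M : Type*} [AddCommMonoid M] {f g : ℕ → M} {d : ℕ}

theorem add_mul_eq_add_sum_of_increment (hfg : ∀ n, f (n + d) = f n + g n) (t n : ℕ) :
    f (n + t * d) = f n + ∑ i ∈ range t, g (n + i * d) := by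
  induction t with
  | zero => simp
  | succ t ih => rw [sum_range_succ, ← add_assoc, ← ih, ← hfg, add_one_mul, add_assoc]

theorem periodic_of_periodic_increment {L m : ℕ} (hfg : ∀ n, f (n + d) = f n + g n)
    (hg : Periodic g L) (hm : ∀ x : M, m • x = 0) : Periodic f (m * (L * d)) := by
  set S : ℕ → M := fun n => ∑ i ∈ range L, g (n + i * d)
  have hS : Periodic S (L * d) := fun n => sum_congr rfl fun i _ => by
    rw [show n + L * d + i * d = n + i * d + d * L by ring]
    simpa using hg.nat_mul d (n + i * d)
  intro n
  rw [add_mul_eq_add_sum_of_increment (add_mul_eq_add_sum_of_increment hfg L) m n,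
    sum_congr rfl fun i _ => by simpa using hS.nat_mul i n]
  simp only [sum_const, card_range, hm, add_zero]

end Increments

theorem p_succ_zero (n : ℕ) : p (n + 1) 0 = 0 := by
  refine card_eq_zero.2 (filter_eq_empty_iff.2 fun P _ hP => ?_)
  obtain ⟨i, hi⟩ := Multiset.exists_mem_of_ne_zero (s := P.parts) fun h => by
    simpa [h] using P.parts_sum
  exact (P.parts_pos hi).ne' (Nat.le_zero.1 (hP i hi))

theorem p_succ {n j : ℕ} (hjn : j + 1 ≤ n) : p n (j + 1) = p n j + p (n - (j + 1)) (j + 1) := by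
  have hwith : #{P : n.Partition | (∀ i ∈ P.parts, i ≤ j + 1) ∧ j + 1 ∈ P.parts}
      = p (n - (j + 1)) (j + 1) := by
    let e := Nat.Partition.partitionWithPartEquiv (Nat.le_add_left 1 j) hjn
    refine card_bij' (fun P hP => e ⟨P, (mem_filter.1 hP).2.2⟩) (fun Q _ => (e.symm Q).1)
      ?_ ?_ (fun P _ => by simp) (fun Q _ => by simp)
    · intro P hP
      simp only [mem_filter, mem_univ, true_and] at hP ⊢
      simpa [e] using fun i hi => hP.1 i (Multiset.mem_of_mem_erase hi)
    · intro Q hQ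
      simp only [mem_filter, mem_univ, true_and] at hQ ⊢
      simpa [e] using hQ
  have hwithout : #{P : n.Partition | (∀ i ∈ P.parts, i ≤ j + 1) ∧ j + 1 ∉ P.parts} = p n j := by
    refine congrArg card (filter_congr fun P _ => ?_)
    refine ⟨fun ⟨hle, hnot⟩ i hi => ?_, fun h => ⟨fun i hi => (h i hi).trans j.le_succ,
      fun hmem => by simpa using h _ hmem⟩⟩
    exact Nat.le_of_lt_succ ((hle i hi).lt_of_ne fun e => hnot (e ▸ hi))
  rw [add_comm (p n j), ← hwith, ← hwithout, ← filter_filter, ← filter_filter,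
    card_filter_add_card_filter_not]
  rfl

theorem periodic_p_succ {m k L : ℕ} (h : Periodic (fun n => (p (n + (k + 1)) k : ZMod m)) L) :
    Periodic (fun n => (p n (k + 1) : ZMod m)) (m * (L * (k + 1))) := by
  refine periodic_of_periodic_increment (fun n => ?_) h fun x => by simp
  rw [p_succ (Nat.le_add_left _ _), Nat.add_sub_cancel, Nat.cast_add, add_comm]

theorem exists_periodic_p_add_succ (k : ℕ) {m : ℕ} (hm : 0 < m) :
    ∃ L, 0 < L ∧ Periodic (fun n => (p (n + (k + 1)) k : ZMod m)) L := by
  induction k with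
  | zero => exact ⟨1, one_pos, fun n => by simp [p_succ_zero]⟩
  | succ k ih =>
    obtain ⟨L, hL, h⟩ := ih
    exact ⟨_, by positivity, (periodic_p_succ h).add_const _⟩

theorem stmt_0 (k m : ℕ) (hk : 0 < k) (hm : 0 < m) :
    ∃ L : ℕ, 0 < L ∧ ∀ n : ℕ, p (n + L) k ≡ p n k [MOD m] := by
  obtain ⟨k, rfl⟩ := Nat.exists_eq_add_one_of_ne_zero hk.ne'
  obtain ⟨L, hL, h⟩ := exists_periodic_p_add_succ k hm
  exact ⟨_, by positivity, fun n => (ZMod.natCast_eq_natCast_iff _ _ _).1 (periodic_p_succ h n)⟩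
end

section
/- For any positive integers k and m, and every natural number n, p(n + m^(k-1)·k!, k) ≡ p(n, k) (mod m); that is, m^(k-1)·k! is a period of p(·,k) modulo m. -/
open Finset Function

theorem Function.Periodic.sum_range_mul {M : Type*} [AddCommMonoid M] {f : ℕ → M} {T : ℕ}
    (hf : Periodic f T) (c : ℕ) : ∑ j ∈ range (c * T), f j = c • ∑ j ∈ range T, f j := by
  induction c with
  | zero => simp
  | succ c ih =>
    rw [add_mul, one_mul, sum_range_add, ih, succ_nsmul]
    congr 1
    exact sum_congr rfl fun j _ => by simpa [add_comm] using (hf.nat_mul c) j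

theorem periodic_of_add_eq_add {M : Type*} [AddCommMonoid M] {g f : ℕ → M}
    {d T m : ℕ} (hg : ∀ n, g (n + d) = g n + f (n + d)) (hf : Periodic f T)
    (hm : ∀ x : M, m • x = 0) : Periodic g (m * T * d) := by
  have telescope : ∀ n c, g (n + c * d) = g n + ∑ j ∈ range c, f (n + (j + 1) * d) := by
    intro n c
    induction c with
    | zero => simp
    | succ c ih => rw [sum_range_succ, ← add_assoc, ← ih, add_mul, one_mul, ← add_assoc, hg]
  intro n
  have hperiodic : Periodic (fun j => f (n + (j + 1) * d)) T := fun j => by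
    simpa [add_mul, mul_comm T, add_right_comm _ (d * T), ← add_assoc] using
      (hf.nat_mul d) (n + (j + 1) * d)
  rw [telescope, hperiodic.sum_range_mul, hm, add_zero]

theorem card_filter_mem_parts {N d k : ℕ} (hd : 0 < d) (hdN : d ≤ N) (hdk : d ≤ k) :
    #{P : N.Partition | d ∈ P.parts ∧ ∀ i ∈ P.parts, i ≤ k} = p (N - d) k := by
  rw [p, ← Fintype.card_subtype, ← Fintype.card_subtype]
  refine Fintype.card_congr <| (Equiv.subtypeSubtypeEquivSubtypeInter _ _).symm.trans <|
    (Nat.Partition.partitionWithPartEquiv hd hdN).subtypeEquiv fun P => ?_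
  conv_lhs => rw [← Multiset.cons_erase P.2]
  simp [hdk]

theorem p_one (n : ℕ) : p n 1 = 1 := by
  rw [p, card_eq_one]
  refine ⟨⟨Multiset.replicate n 1, fun hi => by simp [Multiset.eq_of_mem_replicate hi],
    by simp⟩, ?_⟩
  ext P
  simp only [mem_filter, mem_univ, true_and, mem_singleton, Nat.Partition.ext_iff]
  constructor
  · intro h
    have hones : P.parts = Multiset.replicate (Multiset.card P.parts) 1 :=
      Multiset.eq_replicate_card.2 fun i hi => le_antisymm (h i hi) (P.parts_pos hi)
    have hcard : Multiset.card P.parts = n := by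
      have hsum := P.parts_sum
      rwa [hones, Multiset.sum_replicate, smul_eq_mul, mul_one] at hsum
    rw [hones, hcard]
  · rintro h i hi
    rw [h] at hi
    exact (Multiset.eq_of_mem_replicate hi).le

theorem p_add_succ (n k : ℕ) : p (n + (k + 1)) (k + 1) = p (n + (k + 1)) k + p n (k + 1) := by
  have hwith := card_filter_mem_parts (N := n + (k + 1)) k.succ_pos (Nat.le_add_left _ _) le_rfl
  rw [Nat.add_sub_cancel] at hwith
  rw [← hwith, p, p, ← card_filter_add_card_filter_not (p := fun P => k + 1 ∈ P.parts),
    filter_filter, filter_filter, add_comm]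
  congr 2 <;> ext P <;> grind

theorem p_periodic_zmod (m k : ℕ) :
    Periodic (fun n => (p n (k + 1) : ZMod m)) (m ^ k * (k + 1).factorial) := by
  induction k with
  | zero => simp [p_one]
  | succ k ih =>
    convert periodic_of_add_eq_add (g := fun n => (p n (k + 1 + 1) : ZMod m))
      (d := k + 1 + 1) (m := m) (fun n => by rw [p_add_succ, Nat.cast_add, add_comm]) ih
      (fun x => by simp) using 1
    rw [Nat.factorial_succ (k + 1)]
    ring

theorem stmt_1_general (k m : ℕ) (hk : 0 < k) (n : ℕ) :
    p (n + m ^ (k - 1) * Nat.factorial k) k ≡ p n k [MOD m] := by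
  obtain ⟨k, rfl⟩ := Nat.exists_eq_add_of_lt hk
  rw [← ZMod.natCast_eq_natCast_iff]
  simpa using p_periodic_zmod m k n

theorem stmt_1 (k m : ℕ) (hk : 0 < k) (hm : 0 < m) (n : ℕ) :
    p (n + m ^ (k - 1) * Nat.factorial k) k ≡ p n k [MOD m] :=
  stmt_1_general k m hk n
end

section
/- For every positive integer k, the odd density of p(·,k) exists: the sequence N ↦ #{n ≤ N : p(n,k) is odd}/N converges as N → ∞. -/
/-!
Removing one part equal to `k + 1` gives `p(n, k + 1) = p(n, k) + p(n - k - 1, k + 1)`, so modulo 2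
the sequence `p(·, k + 1)` is obtained from `p(·, k)` by summing along arithmetic progressions of
difference `k + 1`. In characteristic two, summing an eventually periodic sequence over two of its
periods gives `0`, so by induction on `k` (starting from `p(n, 0) = 0` for `n > 0`) the parities of
`p(n, k)` are eventually periodic in `n`. The counting function of an eventually periodic set grows
by a fixed amount `c` over each period `T`, so its density exists and equals `c / T`.
-/

open Finset Filter Topology

lemma p_zero_of_ne_zero {n : ℕ} (hn : n ≠ 0) : p n 0 = 0 := by
  rw [p, card_eq_zero, filter_eq_empty_iff]
  intro P _ hP
  obtain ⟨i, hi⟩ := Multiset.exists_mem_of_ne_zero (s := P.parts) fun h0 => hn <| by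
    rw [← P.parts_sum, h0, Multiset.sum_zero]
  exact (P.parts_pos hi).ne' (Nat.le_zero.1 (hP i hi))

lemma p_succ_of_le {n k : ℕ} (h : k + 1 ≤ n) :
    p n (k + 1) = p n k + p (n - (k + 1)) (k + 1) := by
  rw [p, ← card_filter_add_card_filter_not (p := fun P : n.Partition => k + 1 ∉ P.parts),
    filter_filter, filter_filter]
  congr 1
  · congr 1
    refine filter_congr fun P _ => ⟨fun ⟨hle, hnot⟩ i hi => ?_, fun hle => ⟨?_, ?_⟩⟩
    · exact Nat.le_of_lt_succ <| (hle i hi).lt_of_ne fun hik => hnot (hik ▸ hi)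
    · exact fun i hi => (hle i hi).trans k.le_succ
    · exact fun hmem => (hle _ hmem).not_gt k.lt_succ_self
  · let e := Nat.Partition.partitionWithPartEquiv (Nat.succ_pos k) h
    refine card_bij' (fun P hP => e ⟨P, not_not.1 (mem_filter.1 hP).2.2⟩)
      (fun Q _ => (e.symm Q).1) ?_ ?_ ?_ ?_
    · intro P hP
      simp only [mem_filter, mem_univ, true_and, not_not, e,
        Nat.Partition.partitionWithPartEquiv_apply_parts] at hP ⊢
      exact fun i hi => hP.1 i (Multiset.mem_of_mem_erase hi)
    · intro Q hQ
      simp only [mem_filter, mem_univ, true_and, not_not, e,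
        Nat.Partition.partitionWithPartEquiv_symm_apply_parts] at hQ ⊢
      grind
    · intro P _
      simp [e]
    · intro Q _
      simp [e]

def EventuallyPeriodic {α : Type*} (a : ℕ → α) : Prop :=
  ∃ T > 0, ∀ᶠ n in atTop, a (n + T) = a n

namespace EventuallyPeriodic

lemma of_eventually_const {α : Type*} {a : ℕ → α} {c : α} (h : ∀ᶠ n in atTop, a n = c) :
    EventuallyPeriodic a :=
  ⟨1, one_pos, ((tendsto_add_atTop_nat 1).eventually h).and h |>.mono fun _ h =>
    h.1.trans h.2.symm⟩

lemma finite_range {α : Type*} {a : ℕ → α} (ha : EventuallyPeriodic a) :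
    (Set.range a).Finite := by
  obtain ⟨T, hT, hper⟩ := ha
  obtain ⟨n0, hn0⟩ := eventually_atTop.1 hper
  refine (Set.finite_Iio (n0 + T) |>.image a).subset ?_
  rintro _ ⟨n, rfl⟩
  induction n using Nat.strong_induction_on with
  | _ n ih =>
    by_cases hn : n < n0 + T
    · exact ⟨n, hn, rfl⟩
    · have := hn0 (n - T) (by omega)
      rw [Nat.sub_add_cancel (by omega)] at this
      rw [this]
      exact ih _ (by omega)

lemma of_eq_add_sub {R : Type*} [Ring R] [CharP R 2] {a b : ℕ → R} {m : ℕ} (hm : 0 < m)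
    (hb : EventuallyPeriodic b) (hab : ∀ n, m ≤ n → a n = b n + a (n - m)) :
    EventuallyPeriodic a := by
  obtain ⟨T, hT, hper⟩ := hb
  obtain ⟨n0, hn0⟩ := eventually_atTop.1 hper
  have htele : ∀ n j, a (n + j * m) = a n + ∑ i ∈ range j, b (n + (i + 1) * m) := by
    intro n j
    induction j with
    | zero => simp
    | succ j ih =>
      rw [hab _ (by nlinarith), sum_range_succ, show n + (j + 1) * m - m = n + j * m by
        rw [add_mul, one_mul, ← add_assoc, Nat.add_sub_cancel], ih]
      abel
  have hbT : ∀ n ≥ n0, ∀ j, b (n + j * T) = b n := by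
    intro n hn j
    induction j with
    | zero => simp
    | succ j ih => rw [add_mul, one_mul, ← add_assoc, hn0 _ (by omega), ih]
  refine ⟨(T + T) * m, by positivity, eventually_atTop.2 ⟨n0, fun n hn => ?_⟩⟩
  have hsecond : ∀ i, b (n + (T + i + 1) * m) = b (n + (i + 1) * m) := fun i => by
    rw [← hbT (n + (i + 1) * m) (by nlinarith) m]
    ring_nf
  rw [htele, sum_range_add]
  simp only [hsecond, CharTwo.add_self_eq_zero, add_zero]

end EventuallyPeriodic

lemma eventuallyPeriodic_p_mod_two (k : ℕ) : EventuallyPeriodic fun n => (p n k : ZMod 2) := by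
  induction k with
  | zero =>
    refine EventuallyPeriodic.of_eventually_const (c := 0)
      (eventually_atTop.2 ⟨1, fun n hn => ?_⟩)
    simp [p_zero_of_ne_zero (by omega : n ≠ 0)]
  | succ k ih =>
    refine EventuallyPeriodic.of_eq_add_sub k.succ_pos ih fun n hn => ?_
    simp [p_succ_of_le hn]

lemma tendsto_div_of_eventually_add_eq {u : ℕ → ℝ} {T : ℕ} {c : ℝ} (hT : 0 < T)
    (hu : ∀ᶠ n in atTop, u (n + T) = u n + c) :
    Tendsto (fun n => u n / n) atTop (𝓝 (c / T)) := by
  set g : ℕ → ℝ := fun n => u n - c / T * n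
  have hg : EventuallyPeriodic g := ⟨T, hT, hu.mono fun n hn => by
    simp only [g, hn, Nat.cast_add]
    field_simp
    ring⟩
  obtain ⟨C, hC⟩ := (hg.finite_range.image abs).bddAbove
  have hgC : ∀ n, |g n| ≤ C := fun n => hC ⟨g n, ⟨n, rfl⟩, rfl⟩
  have hg0 : Tendsto (fun n => g n / n) atTop (𝓝 0) :=
    squeeze_zero_norm
      (fun n => by rw [Real.norm_eq_abs, abs_div, Nat.abs_cast]; gcongr; exact hgC n)
      (tendsto_const_div_atTop_nhds_zero_nat C)
  have hlim := hg0.const_add (c / T)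
  rw [add_zero] at hlim
  refine hlim.congr' ((eventually_ne_atTop 0).mono fun n hn => ?_)
  simp only [g]
  field_simp
  ring

lemma Nat.exists_eventually_count_add_eq {P : ℕ → Prop} [DecidablePred P] {T : ℕ}
    (hP : ∀ᶠ n in atTop, P (n + T) ↔ P n) :
    ∃ c, ∀ᶠ n in atTop, Nat.count P (n + T) = Nat.count P n + c := by
  obtain ⟨n0, hn0⟩ := eventually_atTop.1 hP
  refine ⟨Nat.count P (n0 + T) - Nat.count P n0, eventually_atTop.2 ⟨n0, fun n hn => ?_⟩⟩
  have hmono := Nat.count_monotone P (Nat.le_add_right n0 T)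
  suffices Nat.count P (n + T) + Nat.count P n0 = Nat.count P n + Nat.count P (n0 + T) by omega
  induction n, hn using Nat.le_induction with
  | base => ring
  | succ n hn ih =>
    rw [Nat.add_right_comm]
    simp only [Nat.count_succ, hn0 n hn]
    split_ifs <;> omega

theorem stmt_5_general (k : ℕ) :
    ∃ d : ℝ, Filter.Tendsto
      (fun N : ℕ =>
        (((Finset.range (N + 1)).filter (fun n => Odd (p n k))).card : ℝ) / N)
      Filter.atTop (nhds d) := by
  obtain ⟨T, hT, hper⟩ := eventuallyPeriodic_p_mod_two k
  have hodd : ∀ᶠ n in atTop, Odd (p (n + T) k) ↔ Odd (p n k) :=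
    hper.mono fun n (hn : (p (n + T) k : ZMod 2) = p n k) => by
      rw [← ZMod.natCast_eq_one_iff_odd, ← ZMod.natCast_eq_one_iff_odd]
      exact iff_of_eq (congrArg (· = 1) hn)
  -- `P` is given explicitly: inferring it from `hodd` makes Lean unfold `p`.
  obtain ⟨c, hc⟩ := Nat.exists_eventually_count_add_eq (P := fun n => Odd (p n k)) hodd
  let u : ℕ → ℝ := fun N => Nat.count (fun n => Odd (p n k)) (N + 1)
  have hu : ∀ᶠ N in atTop, u (N + T) = u N + c :=
    (tendsto_add_atTop_nat 1).eventually hc |>.mono fun N hN => by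
      simp only [u, Nat.add_right_comm N T 1, hN, Nat.cast_add]
  refine ⟨c / T, (tendsto_div_of_eventually_add_eq hT hu).congr fun N => ?_⟩
  simp only [u, Nat.count_eq_card_filter_range]

theorem stmt_5 (k : ℕ) (hk : 0 < k) :
    ∃ d : ℝ, Filter.Tendsto
      (fun N : ℕ =>
        (((Finset.range (N + 1)).filter (fun n => Odd (p n k))).card : ℝ) / N)
      Filter.atTop (nhds d) :=
  stmt_5_general k
end

section
/- For every integer k > 1, the density of the set {n : p(n,k) is odd and p(n,k-1) is odd} equals the density of the set {n : p(n,k) is even and p(n,k-1) is odd}; that is, lim_{N→∞} #{n ≤ N : p(n,k) odd, p(n,k-1) odd}/N = lim_{N→∞} #{n ≤ N : p(n,k) even, p(n,k-1) odd}/N, and in particular both limits exist and are equal. -/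
open Function Filter Topology Nat

theorem p_zero_right {n : ℕ} (hn : 0 < n) : p n 0 = 0 := by
  rw [p, Finset.card_eq_zero, Finset.filter_eq_empty_iff]
  intro P _ hP
  obtain ⟨i, hi⟩ : ∃ i, i ∈ P.parts := Multiset.exists_mem_of_ne_zero fun h => by
    have := P.parts_sum
    simp [h] at this
    omega
  exact (P.parts_pos hi).ne' (Nat.le_zero.mp (hP i hi))

theorem p_sub_one_of_lt {n k : ℕ} (h : n < k) : p n (k - 1) = p n k := by
  unfold p
  congr 1
  refine Finset.filter_congr fun P _ => forall₂_congr fun i hi => ?_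
  have := P.le_of_mem_parts hi
  omega

theorem p_add_self {n k : ℕ} (hk : 0 < k) : p (n + k) k = p (n + k) (k - 1) + p n k := by
  classical
  rw [p, ← Finset.card_filter_add_card_filter_not
    (p := fun P : (n + k).Partition => k ∈ P.parts), Finset.filter_filter, Finset.filter_filter,
    add_comm]
  congr 1
  · unfold p
    congr 1
    refine Finset.filter_congr fun P _ => ⟨fun ⟨h, hnot⟩ i hi => ?_, fun h => ⟨?_, ?_⟩⟩
    · have : i ≠ k := fun e => hnot (e ▸ hi)
      have := h i hi
      omega
    · exact fun i hi => (h i hi).trans (Nat.sub_le k 1)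
    · exact fun hmem => by have := h k hmem; omega
  · -- removing one part `k` is a bijection onto the partitions of `n`
    refine Finset.card_bij'
      (fun P hP => ⟨P.parts.erase k, fun hi => P.parts_pos (Multiset.mem_of_mem_erase hi), ?_⟩)
      (fun Q _ => ⟨k ::ₘ Q.parts, fun {i} hi => ?_,
        by rw [Multiset.sum_cons, Q.parts_sum, add_comm]⟩)
      ?_ ?_ ?_ ?_
    · have hmem : k ∈ P.parts := (Finset.mem_filter.mp hP).2.2
      have := P.parts_sum
      rw [← Multiset.cons_erase hmem, Multiset.sum_cons] at this
      omega
    · rcases Multiset.mem_cons.mp hi with rfl | h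
      exacts [hk, Q.parts_pos h]
    · intro P hP
      simp only [Finset.mem_filter, Finset.mem_univ, true_and] at hP ⊢
      exact fun i hi => hP.1 i (Multiset.mem_of_mem_erase hi)
    · intro Q hQ
      simp only [Finset.mem_filter, Finset.mem_univ, true_and] at hQ ⊢
      refine ⟨fun i hi => ?_, Multiset.mem_cons_self _ _⟩
      rcases Multiset.mem_cons.mp hi with rfl | h
      exacts [le_rfl, hQ i h]
    · intro P hP
      exact Nat.Partition.ext (Multiset.cons_erase (Finset.mem_filter.mp hP).2.2)
    · intro Q _
      exact Nat.Partition.ext (Multiset.erase_cons_head _ _)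

theorem odd_p_sub_one_iff {n k : ℕ} (hk : 0 < k) :
    Odd (p (n + k) (k - 1)) ↔ ¬(Odd (p (n + k) k) ↔ Odd (p n k)) := by
  rw [p_add_self hk, Nat.odd_add, ← Nat.not_odd_iff_even]
  tauto

theorem periodic_of_add_eq_add_periodic {M : Type*} [AddCommGroup M] (hM : ∀ x : M, x + x = 0)
    {f g : ℕ → M} {k T : ℕ} (hg : Periodic g T) (hf : ∀ n, f (n + k) = f n + g (n + k)) :
    Periodic f (2 * (T * k)) := by
  set L := T * k
  have hgL : Periodic g L := by simpa [L, mul_comm] using hg.nat_mul k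
  have hD : Periodic (fun n => f (n + L) - f n) k := fun n => by
    dsimp only
    rw [add_right_comm n k L, hf, hf, ← add_right_comm n k L, hgL]
    abel
  have hDL : Periodic (fun n => f (n + L) - f n) L := by simpa [L] using hD.nat_mul T
  intro n
  have h1 := hDL n
  simp only at h1
  rw [two_mul, ← add_assoc]
  calc f (n + L + L) = (f (n + L + L) - f (n + L)) + (f (n + L) - f n) + f n := by abel
    _ = f n := by rw [h1, hM, zero_add]

theorem exists_periodic_p_cast_zmod_two (k : ℕ) :
    ∃ N₀ T, 0 < T ∧ Periodic (fun n => (p (N₀ + n) k : ZMod 2)) T := by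
  induction k with
  | zero => exact ⟨1, 1, one_pos, fun n => by simp [p_zero_right]⟩
  | succ k ih =>
    obtain ⟨N₀, T, hT, hper⟩ := ih
    refine ⟨N₀, 2 * (T * (k + 1)), by positivity,
      periodic_of_add_eq_add_periodic CharTwo.add_self_eq_zero hper fun n => ?_⟩
    rw [← add_assoc, p_add_self k.succ_pos, Nat.succ_sub_one, Nat.cast_add, add_comm]

theorem tendsto_div_of_abs_sub_le {f g : ℕ → ℝ} {d B : ℝ}
    (hg : Tendsto (fun n => g n / n) atTop (𝓝 d)) (hfg : ∀ n, |f n - g n| ≤ B) :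
    Tendsto (fun n => f n / n) atTop (𝓝 d) := by
  have h0 : Tendsto (fun n : ℕ => (f n - g n) / n) atTop (𝓝 0) := by
    refine squeeze_zero_norm (fun n => ?_) (tendsto_const_div_atTop_nhds_zero_nat B)
    rw [norm_div, Real.norm_eq_abs, Real.norm_natCast]
    exact div_le_div_of_nonneg_right (hfg n) n.cast_nonneg
  simpa [sub_div] using h0.add hg

theorem Function.Periodic.abs_le_sum_range {v : ℕ → ℝ} {T : ℕ} (hv : Periodic v T)
    (hT : 0 < T) (n : ℕ) : |v n| ≤ ∑ m ∈ Finset.range T, |v m| := by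
  rw [← hv.map_mod_nat n]
  exact Finset.single_le_sum (fun m _ => abs_nonneg (v m)) (Finset.mem_range.mpr (n.mod_lt hT))

theorem tendsto_count_div_of_periodic {P : ℕ → Prop} [DecidablePred P] {T : ℕ} (hT : 0 < T)
    (hP : Periodic P T) :
    Tendsto (fun n => (count P n : ℝ) / n) atTop (𝓝 (count P T / T)) := by
  set c : ℝ := count P T / T
  have hcount : ∀ n, count P (n + T) = count P n + count P T := fun n => by
    have hshift : count (fun k => P (k + T)) n = count P n := by
      congr 1
      exact funext hP
    rw [count_add', hshift, add_comm]
  have hv : Periodic (fun n => (count P n : ℝ) - c * n) T := fun n => by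
    have : c * T = count P T := div_mul_cancel₀ _ (by positivity)
    simp only [hcount, Nat.cast_add, mul_add, this]
    ring
  have hlin : Tendsto (fun n : ℕ => c * n / n) atTop (𝓝 c) :=
    tendsto_const_nhds.congr' <| (eventually_ne_atTop 0).mono fun n hn =>
      (mul_div_cancel_right₀ c (Nat.cast_ne_zero.mpr hn)).symm
  exact tendsto_div_of_abs_sub_le hlin (hv.abs_le_sum_range hT)

theorem tendsto_count_div_of_periodic_shift {P : ℕ → Prop} [DecidablePred P] {N₀ T : ℕ}
    (hT : 0 < T) (hP : Periodic (fun n => P (N₀ + n)) T) :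
    Tendsto (fun n => (count P n : ℝ) / n) atTop
      (𝓝 (count (fun n => P (N₀ + n)) T / T)) := by
  refine tendsto_div_of_abs_sub_le (tendsto_count_div_of_periodic hT hP) (B := N₀) fun n => ?_
  have h₁ := count_add P N₀ n
  have h₂ := count_add' P N₀ n
  have : count (fun k => P (k + n)) N₀ ≤ N₀ := count_le _
  have : count P N₀ ≤ N₀ := count_le _
  rw [abs_sub_le_iff, sub_le_iff_le_add, sub_le_iff_le_add]
  constructor <;> norm_cast <;> omega

theorem tendsto_card_filter_range_succ_div {P : ℕ → Prop} [DecidablePred P] {d : ℝ}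
    (h : Tendsto (fun n => (count P n : ℝ) / n) atTop (𝓝 d)) :
    Tendsto (fun n => (((Finset.range (n + 1)).filter P).card : ℝ) / n) atTop (𝓝 d) := by
  simp_rw [← count_eq_card_filter_range]
  refine tendsto_div_of_abs_sub_le h (B := 1) fun n => ?_
  rw [count_succ]
  split_ifs <;> simp

theorem count_odd_odd_add_count_odd_sub {k : ℕ} (hk : 0 < k) (N : ℕ) :
    count (fun n => Odd (p n k) ∧ Odd (p n (k - 1))) N + count (fun n => Odd (p n k)) (N - k) =
      count (fun n => Even (p n k) ∧ Odd (p n (k - 1))) N + count (fun n => Odd (p n k)) N := by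
  induction N with
  | zero => simp
  | succ N ih =>
    simp only [count_succ]
    have parity : ∀ x : ℕ, Odd x ∧ ¬Even x ∨ Even x ∧ ¬Odd x := fun x => by
      rcases Nat.even_or_odd x with h | h
      exacts [.inr ⟨h, Nat.not_odd_iff_even.mpr h⟩, .inl ⟨h, Nat.not_even_iff_odd.mpr h⟩]
    rcases lt_or_ge N k with hN | hN
    · rw [show N + 1 - k = N - k by omega, p_sub_one_of_lt hN]
      rcases parity (p N k) with ⟨h, h'⟩ | ⟨h, h'⟩ <;> simp [h, h'] <;> omega
    · obtain ⟨m, rfl⟩ : ∃ m, N = m + k := ⟨N - k, by omega⟩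
      rw [show m + k + 1 - k = m + 1 by omega, Nat.add_sub_cancel, count_succ] at *
      simp only [odd_p_sub_one_iff hk]
      rcases parity (p (m + k) k) with ⟨h, h'⟩ | ⟨h, h'⟩ <;> by_cases hm : Odd (p m k) <;>
        simp [h, h', hm] <;> omega

theorem abs_count_odd_odd_sub_count_even_odd_le {k : ℕ} (hk : 0 < k) (N : ℕ) :
    |(count (fun n => Even (p n k) ∧ Odd (p n (k - 1))) N : ℝ) -
      count (fun n => Odd (p n k) ∧ Odd (p n (k - 1))) N| ≤ k := by
  have hid := count_odd_odd_add_count_odd_sub hk N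
  have hmono := count_monotone (fun n => Odd (p n k)) (N.sub_le k)
  have hgap : count (fun n => Odd (p n k)) N ≤ count (fun n => Odd (p n k)) (N - k) + k := by
    calc count (fun n => Odd (p n k)) N ≤ count (fun n => Odd (p n k)) (N - k + k) :=
          count_monotone _ (by omega)
      _ ≤ count (fun n => Odd (p n k)) (N - k) + k := by rw [count_add]; gcongr; exact count_le _
  rw [abs_sub_le_iff, sub_le_iff_le_add, sub_le_iff_le_add]
  constructor <;> norm_cast <;> omega

theorem periodic_odd_p_and_odd_p_sub_one {k N₀ T : ℕ} (hk : 0 < k)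
    (hper : Periodic (fun n => (p (N₀ + n) k : ZMod 2)) T) :
    Periodic (fun n => Odd (p (N₀ + k + n) k) ∧ Odd (p (N₀ + k + n) (k - 1))) T := by
  have hodd : ∀ n, Odd (p (N₀ + (n + T)) k) ↔ Odd (p (N₀ + n) k) := fun n => by
    simpa only [ZMod.natCast_eq_one_iff_odd, eq_iff_iff] using congrArg (· = 1) (hper n)
  have hrec : ∀ n, (Odd (p (N₀ + k + n) k) ∧ Odd (p (N₀ + k + n) (k - 1))) ↔
      Odd (p (N₀ + k + n) k) ∧ ¬Odd (p (N₀ + n) k) := fun n => by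
    rw [add_right_comm, odd_p_sub_one_iff hk]
    tauto
  intro n
  simp only [eq_iff_iff, hrec]
  rw [show N₀ + k + (n + T) = N₀ + (k + n + T) by ring, hodd, hodd, ← add_assoc]

theorem stmt_6 (k : ℕ) (hk : 1 < k) :
    ∃ d : ℝ,
      Filter.Tendsto
        (fun N : ℕ =>
          (((Finset.range (N + 1)).filter
            (fun n => Odd (p n k) ∧ Odd (p n (k - 1)))).card : ℝ) / N)
        Filter.atTop (nhds d) ∧
      Filter.Tendsto
        (fun N : ℕ =>
          (((Finset.range (N + 1)).filter
            (fun n => Even (p n k) ∧ Odd (p n (k - 1)))).card : ℝ) / N)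
        Filter.atTop (nhds d) := by
  have hk₀ : 0 < k := by omega
  obtain ⟨N₀, T, hT, hper⟩ := exists_periodic_p_cast_zmod_two k
  have hodd := tendsto_count_div_of_periodic_shift (P := fun n => Odd (p n k) ∧ Odd (p n (k - 1)))
    hT (periodic_odd_p_and_odd_p_sub_one hk₀ hper)
  have heven := tendsto_div_of_abs_sub_le hodd (abs_count_odd_odd_sub_count_even_odd_le hk₀)
  exact ⟨_, tendsto_card_filter_range_succ_div hodd, tendsto_card_filter_range_succ_div heven⟩
end

section
/- For every integer k ≥ 2, there exist k(k+1)/2 − 1 consecutive even values of p(·,k): there exists a natural number i such that p(n, k) is even for all n with i ≤ n ≤ i + k(k+1)/2 − 2. -/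
/-!
Over `ZMod 2` the generating function `∑ p(n,k) xⁿ` is the inverse of the polynomial
`D = ∏_{j=1}^{k} (1 - x^j)`, of degree `k(k+1)/2`. Each factor divides `x^{k!} - 1`, so `D`
divides `(x^{k!} - 1)^k` and hence, in characteristic `2`, also `(x^{k!} - 1)^{2^k} = x^N - 1`
with `N = k! 2^k`.
Writing `x^N - 1 = D G`, we get `1/D = -G (1 + x^N + x^{2N} + ⋯)`, so below `x^N` the
coefficients of the generating function are those of `-G`. Since `deg G = N - k(k+1)/2`, the
coefficients of index `deg G + 1, …, N - 1` vanish.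
-/

open Finset Polynomial Nat
open scoped PowerSeries.WithPiTopology

theorem p_eq_card_restricted (n k : ℕ) : p n k = #(Nat.Partition.restricted n (· ≤ k)) := rfl

theorem powerSeriesMk_p_mul_prod_one_sub_X_pow (R : Type*) [CommRing R] (k : ℕ) :
    PowerSeries.mk (fun n ↦ (p n k : R)) *
      ∏ j ∈ range k, (1 - PowerSeries.X ^ (j + 1)) = 1 := by
  -- The identity is algebraic; the discrete topology only serves the product formula.
  let _ : TopologicalSpace R := ⊥
  have _ : DiscreteTopology R := ⟨rfl⟩
  have hgen := Nat.Partition.hasProd_powerSeriesMk_card_restricted R (· ≤ k)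
  have hprod := (hasProd_prod_of_ne_finset_one (s := range k) fun i hi ↦
    if_neg (by simp only [mem_range, not_lt] at hi; omega)).unique hgen
  simp only [← p_eq_card_restricted] at hprod
  rw [← hprod, ← prod_mul_distrib]
  refine prod_eq_one fun j hj ↦ ?_
  simp_rw [if_pos (Nat.succ_le_of_lt (mem_range.mp hj)), pow_mul]
  exact PowerSeries.WithPiTopology.tsum_pow_mul_one_sub_of_constantCoeff_eq_zero (by simp)

theorem Finset.sum_range_id_add_one (k : ℕ) : ∑ j ∈ range k, (j + 1) = k * (k + 1) / 2 := by
  simpa [sum_range_id, mul_comm] using (sum_range_succ' (fun j ↦ j) k).symm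

namespace Polynomial

variable {R : Type*} [CommRing R]

theorem natDegree_prod_one_sub_X_pow [Nontrivial R] (k : ℕ) :
    (∏ j ∈ range k, (1 - X ^ (j + 1) : R[X])).natDegree = k * (k + 1) / 2 := by
  have hmonic : ∀ j ∈ range k, (X ^ (j + 1) - C 1 : R[X]).Monic := fun j _ ↦
    monic_X_pow_sub_C _ j.succ_ne_zero
  have hsign : ∏ j ∈ range k, (1 - X ^ (j + 1) : R[X]) =
      (-1) ^ k * ∏ j ∈ range k, (X ^ (j + 1) - C 1) := by
    have h := prod_neg (s := range k) fun j ↦ (X ^ (j + 1) - C 1 : R[X])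
    rw [card_range] at h
    simpa only [neg_sub, C_1] using h
  have hdeg : (∏ j ∈ range k, (X ^ (j + 1) - C 1 : R[X])).natDegree = k * (k + 1) / 2 := by
    simp_rw [natDegree_prod_of_monic _ _ hmonic, natDegree_X_pow_sub_C, sum_range_id_add_one]
  rw [hsign]
  rcases neg_one_pow_eq_or R[X] k with h | h <;> rw [h] <;>
    simp only [one_mul, neg_one_mul, natDegree_neg, hdeg]

theorem prod_one_sub_X_pow_dvd_X_pow_sub_one (q : ℕ) [Fact q.Prime] [CharP R q] (k : ℕ) :
    ∏ j ∈ range k, (1 - X ^ (j + 1) : R[X]) ∣ X ^ (k ! * q ^ k) - 1 := by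
  have hfactor : ∀ j ∈ range k, (1 - X ^ (j + 1) : R[X]) ∣ X ^ (k !) - 1 := fun j hj ↦ by
    obtain ⟨m, hm⟩ := Nat.dvd_factorial j.succ_pos (mem_range.mp hj)
    rw [← neg_sub, neg_dvd, hm]
    exact pow_one_sub_dvd_pow_mul_sub_one _ _ _
  calc ∏ j ∈ range k, (1 - X ^ (j + 1) : R[X])
      ∣ (X ^ (k !) - 1) ^ k := by simpa using prod_dvd_prod_of_dvd _ _ hfactor
    _ ∣ (X ^ (k !) - 1) ^ q ^ k := pow_dvd_pow _ (Nat.lt_pow_self (Fact.out : q.Prime).one_lt).le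
    _ = X ^ (k ! * q ^ k) - 1 := by rw [sub_pow_char_pow, one_pow, pow_mul]

theorem natDegree_add_natDegree_of_X_pow_sub_one_eq_mul [IsDomain R] {D G : R[X]} {N : ℕ}
    (hN : 0 < N) (hG : X ^ N - 1 = D * G) : D.natDegree + G.natDegree = N := by
  have hXN : (X ^ N - 1 : R[X]) = X ^ N - C 1 := by rw [C_1]
  have hne : D * G ≠ 0 := hG ▸ hXN ▸ X_pow_sub_C_ne_zero hN 1
  rw [← natDegree_mul (left_ne_zero_of_mul hne) (right_ne_zero_of_mul hne), ← hG, hXN,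
    natDegree_X_pow_sub_C]

end Polynomial

theorem PowerSeries.coeff_eq_neg_coeff_of_mul_eq_one {R : Type*} [CommRing R] {F : PowerSeries R}
    {D G : R[X]} {N n : ℕ} (hFD : F * D = 1) (hG : Polynomial.X ^ N - 1 = D * G) (hn : n < N) :
    coeff n F = -G.coeff n := by
  have hGF : (G : PowerSeries R) = F * (X ^ N - 1) :=
    calc (G : PowerSeries R) = F * D * G := by rw [hFD, one_mul]
      _ = F * (D * G : R[X]) := by rw [Polynomial.coe_mul, mul_assoc]
      _ = F * (X ^ N - 1) := by rw [← hG]; simp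
  rw [← Polynomial.coeff_coe, hGF, mul_sub, mul_one, map_sub, coeff_mul_X_pow',
    if_neg (by omega), zero_sub, neg_neg]

theorem stmt_9_general (k : ℕ) :
    ∃ i : ℕ, ∀ n : ℕ, i ≤ n → n ≤ i + k * (k + 1) / 2 - 2 → Even (p n k) := by
  obtain ⟨G, hG⟩ := prod_one_sub_X_pow_dvd_X_pow_sub_one (R := ZMod 2) 2 k
  have hdeg := natDegree_add_natDegree_of_X_pow_sub_one_eq_mul (by positivity) hG
  rw [natDegree_prod_one_sub_X_pow] at hdeg
  have hFD : PowerSeries.mk (fun n ↦ (p n k : ZMod 2)) *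
      (∏ j ∈ range k, (1 - X ^ (j + 1)) : (ZMod 2)[X]) = 1 := by
    rw [← coeToPowerSeries.ringHom_apply, map_prod]
    simpa using powerSeriesMk_p_mul_prod_one_sub_X_pow (ZMod 2) k
  refine ⟨G.natDegree + 1, fun n h₁ h₂ ↦ ?_⟩
  rw [← ZMod.natCast_eq_zero_iff_even, ← PowerSeries.coeff_mk n (fun n ↦ (p n k : ZMod 2)),
    PowerSeries.coeff_eq_neg_coeff_of_mul_eq_one hFD hG (by omega),
    coeff_eq_zero_of_natDegree_lt (by omega), neg_zero]

theorem stmt_9 (k : ℕ) (hk : 2 ≤ k) :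
    ∃ i : ℕ, ∀ n : ℕ, i ≤ n → n ≤ i + k * (k + 1) / 2 - 2 → Even (p n k) :=
  stmt_9_general k
end
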